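/- arXiv:2412.02217 — 9 statements merged into one kernel-verified Lean document; each statement's English description precedes it below -/
import Mathlib

section
/- Let k ≥ 2 be an integer and E a finite set with |E| ≥ k. Let H = {H_1, …, H_t} be a (possibly empty) family of proper subsets of E such that |H_i| ≥ k for every i ∈ [t] and |H_{i1} ∩ H_{i2}| ≤ k − 2 for all distinct i1, i2 ∈ [t]. Let B_H = {B ⊆ E : |B| = k and B is not a subset of H_i for every i ∈ [t]}. Then there exists a matroid on ground set E whose independent sets are exactly I(B_H) = {S ⊆ E : S ⊆ B for some B ∈ B_H}; moreover this matroid has rank k and every subset of E of cardinality less than k belongs to I(B_H) (i.e., the matroid is paving). -/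
/-- Auxiliary extension lemma: any subset of `E` of size `k-1` extends to a
member of `B_H`. -/
theorem aux_ext {α : Type*} [DecidableEq α] (E : Finset α) (k t : ℕ) (hk : 2 ≤ k)
    (hE : k ≤ E.card) (H : Fin t → Finset α)
    (hproper : ∀ i, H i ⊂ E)
    (hHint : ∀ i1 i2 : Fin t, i1 ≠ i2 → (H i1 ∩ H i2).card ≤ k - 2)
    (S : Finset α) (hS : S ⊆ E) (hcard : S.card = k - 1) :
    ∃ B, (B ⊆ E ∧ B.card = k ∧ ∀ i, ¬ B ⊆ H i) ∧ S ⊆ B := by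
  by_cases h : ∃ i, S ⊆ H i
  · obtain ⟨i, hi⟩ := h
    obtain ⟨e, heE, hei⟩ := Finset.exists_of_ssubset (hproper i)
    have heS : e ∉ S := fun hmem => hei (hi hmem)
    refine ⟨insert e S, ⟨Finset.insert_subset heE hS, ?_, ?_⟩, Finset.subset_insert _ _⟩
    · rw [Finset.card_insert_of_notMem heS, hcard]; omega
    · intro j hj
      by_cases hji : j = i
      · subst hji; exact hei (hj (Finset.mem_insert_self _ _))
      · have hsub : S ⊆ H j ∩ H i :=
          Finset.subset_inter (fun x hx => hj (Finset.mem_insert_of_mem hx)) hi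
        have h1 := Finset.card_le_card hsub
        have h2 := hHint j i hji
        omega
  · push_neg at h
    have hne : ¬ E ⊆ S := fun hsub => by
      have := Finset.card_le_card hsub; omega
    obtain ⟨e, heE, heS⟩ := Finset.not_subset.mp hne
    refine ⟨insert e S, ⟨Finset.insert_subset heE hS, ?_, ?_⟩, Finset.subset_insert _ _⟩
    · rw [Finset.card_insert_of_notMem heS, hcard]; omega
    · intro j hj
      exact h j (fun x hx => hj (Finset.mem_insert_of_mem hx))

/-- Lemma 3.1 / Frank's Theorem 5.3.5: the family `I(B_H)` is the
family of independent sets of a paving matroid of rank `k` on ground set `E`. -/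
theorem stmt0 {α : Type*} [DecidableEq α] (E : Finset α) (k t : ℕ) (hk : 2 ≤ k)
    (hE : k ≤ E.card) (H : Fin t → Finset α)
    (hproper : ∀ i, H i ⊂ E) (hHcard : ∀ i, k ≤ (H i).card)
    (hHint : ∀ i1 i2 : Fin t, i1 ≠ i2 → (H i1 ∩ H i2).card ≤ k - 2) :
    let BH : Set (Finset α) := {B | B ⊆ E ∧ B.card = k ∧ ∀ i, ¬ B ⊆ H i}
    let Ind : Set (Finset α) := {S | ∃ B ∈ BH, S ⊆ B}
    -- `Ind` is the family of independent sets of a matroid on `E`: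
    (∅ ∈ Ind) ∧
    (∀ A B : Finset α, A ∈ Ind → B ⊆ A → B ∈ Ind) ∧
    (∀ A B : Finset α, A ∈ Ind → B ∈ Ind → B.card < A.card →
      ∃ e ∈ A \ B, insert e B ∈ Ind) ∧
    (∀ A ∈ Ind, A ⊆ E) ∧
    -- this matroid has rank `k`:
    (∃ A ∈ Ind, A.card = k) ∧ (∀ A ∈ Ind, A.card ≤ k) ∧
    -- and it is paving:
    (∀ S ⊆ E, S.card < k → S ∈ Ind) := by
  intro BH Ind
  -- every independent set is contained in E and has card ≤ k
  have hsubE : ∀ A ∈ Ind, A ⊆ E := by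
    rintro A ⟨B, ⟨hBE, _, _⟩, hAB⟩
    exact hAB.trans hBE
  have hcardle : ∀ A ∈ Ind, A.card ≤ k := by
    rintro A ⟨B, ⟨_, hBk, _⟩, hAB⟩
    exact hBk ▸ Finset.card_le_card hAB
  -- paving: every small subset of E is independent
  have hpav : ∀ S ⊆ E, S.card < k → S ∈ Ind := by
    intro S hSE hSk
    obtain ⟨T, hST, hTE, hTcard⟩ :=
      Finset.exists_subsuperset_card_eq hSE (by omega : S.card ≤ k - 1) (by omega)
    obtain ⟨B, hB, hTB⟩ := aux_ext E k t hk hE H hproper hHint T hTE hTcard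
    exact ⟨B, hB, hST.trans hTB⟩
  refine ⟨?_, ?_, ?_, hsubE, ?_, hcardle, hpav⟩
  · exact hpav ∅ (Finset.empty_subset _) (by simp; omega)
  · rintro A B ⟨C, hC, hAC⟩ hBA
    exact ⟨C, hC, hBA.trans hAC⟩
  · -- exchange
    intro A B hA hB hlt
    have hAk := hcardle A hA
    have hBE := hsubE B hB
    have hAE := hsubE A hA
    have hAB : ¬ A ⊆ B := fun h => by have := Finset.card_le_card h; omega
    by_cases hsmall : B.card + 1 < k
    · obtain ⟨e, heA, heB⟩ := Finset.not_subset.mp hAB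
      refine ⟨e, Finset.mem_sdiff.mpr ⟨heA, heB⟩, ?_⟩
      apply hpav
      · exact Finset.insert_subset (hAE heA) hBE
      · rw [Finset.card_insert_of_notMem heB]; omega
    · -- B.card = k - 1, A.card = k, so A ∈ BH
      have hBcard : B.card = k - 1 := by omega
      have hAcard : A.card = k := by omega
      obtain ⟨C, ⟨hCE, hCk, hCH⟩, hAC⟩ := hA
      have hACeq : A = C := Finset.eq_of_subset_of_card_le hAC (by omega)
      subst hACeq
      by_cases h : ∃ i, B ⊆ H i
      · obtain ⟨i, hi⟩ := h
        obtain ⟨e, heA, hei⟩ := Finset.not_subset.mp (hCH i)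
        have heB : e ∉ B := fun hmem => hei (hi hmem)
        refine ⟨e, Finset.mem_sdiff.mpr ⟨heA, heB⟩, insert e B,
          ⟨Finset.insert_subset (hCE heA) hBE, ?_, ?_⟩, subset_rfl⟩
        · rw [Finset.card_insert_of_notMem heB]; omega
        · intro j hj
          by_cases hji : j = i
          · subst hji; exact hei (hj (Finset.mem_insert_self _ _))
          · have hsub : B ⊆ H j ∩ H i :=
              Finset.subset_inter (fun x hx => hj (Finset.mem_insert_of_mem hx)) hi
            have h1 := Finset.card_le_card hsub
            have h2 := hHint j i hji
            omega
      · push_neg at h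
        obtain ⟨e, heA, heB⟩ := Finset.not_subset.mp hAB
        refine ⟨e, Finset.mem_sdiff.mpr ⟨heA, heB⟩, insert e B,
          ⟨Finset.insert_subset (hCE heA) hBE, ?_, ?_⟩, subset_rfl⟩
        · rw [Finset.card_insert_of_notMem heB]; omega
        · intro j hj
          exact h j (fun x hx => hj (Finset.mem_insert_of_mem hx))
  · -- rank k: some independent set of size k
    obtain ⟨T, hTE, hTcard⟩ := Finset.exists_subset_card_eq (by omega : k - 1 ≤ E.card)
    obtain ⟨B, hB, _⟩ := aux_ext E k t hk hE H hproper hHint T hTE hTcard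
    exact ⟨B, ⟨B, hB, subset_rfl⟩, hB.2.1⟩
end

section
/- Let n, d ≥ 2 be integers, let L be an SU matrix indexed by [n]×[d], and let G be any family of subsets of grid. Let X be the bases of (n,d,L,G) and let k = Σ_{i∈[n]} L_{i,1}. Then there exists a matroid on ground set grid whose independent sets are exactly I(X); moreover this matroid has rank k and every subset of grid of cardinality less than k belongs to I(X) (i.e., the G-matroid of (n,d,L) is a paving matroid). -/
/-- `L` is a simple-uniform (SU) matrix indexed by `[n] × [d]`. -/

def IsSU (n d : ℕ) (L : Fin n → Fin d → ℕ) : Prop :=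
  (∀ i j, L i j ≤ n) ∧
  (∀ j : Fin d, 2 ≤ ∑ i, L i j ∧ ∑ i, L i j ≤ n ^ d - 1) ∧
  (∀ j1 j2 : Fin d, ∑ i, L i j1 = ∑ i, L i j2)

/-- `S ⊆ grid = [n]^d` is `L`-perfect. -/
def IsPerfect {n d : ℕ} (L : Fin n → Fin d → ℕ) (S : Finset (Fin d → Fin n)) : Prop :=
  ∀ (i : Fin n) (j : Fin d), (S.filter fun e => e j = i).card = L i j

/-- The bases of `(n, d, L, G)`, where `k = Σ_i L_{i,1}`. -/
def basesX {n d : ℕ} (L : Fin n → Fin d → ℕ) (k : ℕ)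
    (G : Set (Finset (Fin d → Fin n))) : Set (Finset (Fin d → Fin n)) :=
  {S | S.card = k ∧ (¬ IsPerfect L S ∨ S ∈ G)}

/-- The `(L,j)`-partition independence system. -/
def ILj {n d : ℕ} (L : Fin n → Fin d → ℕ) (j : Fin d) : Set (Finset (Fin d → Fin n)) :=
  {S | ∀ i : Fin n, (S.filter fun e => e j = i).card ≤ L i j}

/-- `I(B)`: all subsets of members of `B`. -/
def IofB {β : Type*} (B : Set (Finset β)) : Set (Finset β) :=
  {S | ∃ T ∈ B, S ⊆ T}

/-- `S ∈ bases(I)`: `S` is a member of `I` of maximum cardinality. -/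
def IsBasisOf {β : Type*} (I : Set (Finset β)) (S : Finset β) : Prop :=
  S ∈ I ∧ ∀ T ∈ I, T.card ≤ S.card

lemma swap_not_perfect {n d : ℕ} {L : Fin n → Fin d → ℕ} {T : Finset (Fin d → Fin n)}
    (hT : IsPerfect L T) {e f : Fin d → Fin n} (he : e ∈ T) (hf : f ∉ T) :
    ¬ IsPerfect L (insert f (T.erase e)) := by
  intro hT'
  have hef : e ≠ f := fun h => hf (h ▸ he)
  obtain ⟨j, hj⟩ := Function.ne_iff.1 hef
  have h1 := hT (e j) j
  have h2 := hT' (e j) j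
  rw [Finset.filter_insert, if_neg (by simpa using (Ne.symm hj)), Finset.filter_erase] at h2
  have hmem : e ∈ T.filter (fun x => x j = e j) := Finset.mem_filter.2 ⟨he, rfl⟩
  have h3 := Finset.card_erase_of_mem hmem
  have h4 : 1 ≤ (T.filter (fun x => x j = e j)).card := Finset.card_pos.2 ⟨e, hmem⟩
  rw [h3] at h2
  rw [← h1] at h2
  exact absurd h2 (Nat.ne_of_lt (Nat.sub_lt (lt_of_lt_of_le one_pos h4) one_pos))

lemma unique_perfect_ext {n d : ℕ} {L : Fin n → Fin d → ℕ}
    {B : Finset (Fin d → Fin n)} {e1 e2 : Fin d → Fin n} (h1 : e1 ∉ B) (h2 : e2 ∉ B)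
    (hp1 : IsPerfect L (insert e1 B)) (hp2 : IsPerfect L (insert e2 B)) : e1 = e2 := by
  by_contra hne
  obtain ⟨j, hj⟩ := Function.ne_iff.1 hne
  have c1 := hp1 (e1 j) j
  have c2 := hp2 (e1 j) j
  rw [Finset.filter_insert, if_pos rfl,
    Finset.card_insert_of_notMem (fun h => h1 (Finset.mem_filter.1 h).1)] at c1
  rw [Finset.filter_insert, if_neg (Ne.symm hj)] at c2
  rw [← c2] at c1
  exact Nat.succ_ne_self _ c1

/-- Lemma 3.2: the `G`-matroid of `(n,d,L)` is a paving matroid;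
its independent sets are exactly `I(X)` and its rank is `k = Σ_i L_{i,1}`. -/
theorem stmt1 (n d : ℕ) (hn : 2 ≤ n) (hd : 2 ≤ d)
    (L : Fin n → Fin d → ℕ) (hL : IsSU n d L)
    (G : Set (Finset (Fin d → Fin n))) :
    let k : ℕ := ∑ i, L i ⟨0, by omega⟩
    let Ind : Set (Finset (Fin d → Fin n)) := IofB (basesX L k G)
    -- `Ind` is the family of independent sets of a matroid on `grid`:
    (∅ ∈ Ind) ∧
    (∀ A B : Finset (Fin d → Fin n), A ∈ Ind → B ⊆ A → B ∈ Ind) ∧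
    (∀ A B : Finset (Fin d → Fin n), A ∈ Ind → B ∈ Ind → B.card < A.card →
      ∃ e ∈ A \ B, insert e B ∈ Ind) ∧
    -- this matroid has rank `k`:
    (∃ A ∈ Ind, A.card = k) ∧ (∀ A ∈ Ind, A.card ≤ k) ∧
    -- and it is paving:
    (∀ S : Finset (Fin d → Fin n), S.card < k → S ∈ Ind) := by
  intro k Ind
  obtain ⟨hbd, hsum, hcol⟩ := hL
  have hk2 : 2 ≤ k := (hsum ⟨0, by omega⟩).1
  have hkle : k ≤ n ^ d - 1 := (hsum ⟨0, by omega⟩).2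
  have hcardβ : Fintype.card (Fin d → Fin n) = n ^ d := by simp
  have hpos : 0 < n ^ d := pow_pos (by omega) d
  have hklt : k < Fintype.card (Fin d → Fin n) := by rw [hcardβ]; omega
  -- key extension lemma
  have key : ∀ S : Finset (Fin d → Fin n), S.card < k →
      ∃ T, S ⊆ T ∧ T.card = k ∧ ¬ IsPerfect L T := by
    intro S hS
    obtain ⟨T, hST, hTk⟩ := Finset.exists_superset_card_eq (le_of_lt hS) (le_of_lt hklt)
    by_cases hperf : IsPerfect L T
    · have hTS : (T \ S).Nonempty := by
        rw [← Finset.card_pos, Finset.card_sdiff_of_subset hST]; omega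
      obtain ⟨e, he⟩ := hTS
      have heT : e ∈ T := (Finset.mem_sdiff.1 he).1
      have heS : e ∉ S := (Finset.mem_sdiff.1 he).2
      have hcompl : (Tᶜ).Nonempty := by
        rw [← Finset.card_pos, Finset.card_compl]; omega
      obtain ⟨f, hf⟩ := hcompl
      have hfT : f ∉ T := Finset.mem_compl.1 hf
      refine ⟨insert f (T.erase e), ?_, ?_, swap_not_perfect hperf heT hfT⟩
      · intro s hs
        exact Finset.mem_insert_of_mem (Finset.mem_erase.2 ⟨fun h => heS (h ▸ hs), hST hs⟩)
      · rw [Finset.card_insert_of_notMem (fun h => hfT (Finset.mem_erase.1 h).2),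
          Finset.card_erase_of_mem heT]
        omega
    · exact ⟨T, hST, hTk, hperf⟩
  have pav : ∀ S : Finset (Fin d → Fin n), S.card < k → S ∈ Ind := by
    intro S hS
    obtain ⟨T, h1, h2, h3⟩ := key S hS
    exact ⟨T, ⟨h2, Or.inl h3⟩, h1⟩
  obtain ⟨T0, hT0sub, hT0k, hT0p⟩ := key ∅ (by simp; omega)
  have hT0X : T0 ∈ basesX L k G := ⟨hT0k, Or.inl hT0p⟩
  refine ⟨⟨T0, hT0X, Finset.empty_subset _⟩, ?_, ?_, ⟨T0, ⟨T0, hT0X, subset_rfl⟩, hT0k⟩, ?_, pav⟩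
  · rintro A B ⟨T, hT, hAT⟩ hBA
    exact ⟨T, hT, hBA.trans hAT⟩
  · intro A B hA hB hlt
    obtain ⟨TA, hTAX, hATA⟩ := hA
    have hTAk : TA.card = k := hTAX.1
    have hAk : A.card ≤ k := hTAk ▸ Finset.card_le_card hATA
    have hABne : (A \ B).Nonempty := by
      by_contra h
      rw [Finset.not_nonempty_iff_eq_empty, Finset.sdiff_eq_empty_iff_subset] at h
      exact absurd (Finset.card_le_card h) (by omega)
    by_cases hBk : B.card + 1 < k
    · obtain ⟨e, he⟩ := hABne
      have hlt' : (insert e B).card < k := by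
        have := Finset.card_insert_le e B; omega
      exact ⟨e, he, pav _ hlt'⟩
    · have hBk' : B.card + 1 = k := by omega
      by_cases hex : ∃ e ∈ A \ B, ¬ IsPerfect L (insert e B)
      · obtain ⟨e, he, hnp⟩ := hex
        have heB : e ∉ B := (Finset.mem_sdiff.1 he).2
        exact ⟨e, he, ⟨insert e B,
          ⟨by rw [Finset.card_insert_of_notMem heB]; omega, Or.inl hnp⟩, subset_rfl⟩⟩
      · push_neg at hex
        obtain ⟨e, he⟩ := hABne
        have hAkeq : A.card = k := by omega
        have huniq : ∀ e' ∈ A \ B, e' = e := fun e' he' =>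
          unique_perfect_ext (Finset.mem_sdiff.1 he').2 (Finset.mem_sdiff.1 he).2
            (hex e' he') (hex e he)
        have hsub : A ⊆ insert e B := by
          intro a ha
          by_cases haB : a ∈ B
          · exact Finset.mem_insert_of_mem haB
          · exact (huniq a (Finset.mem_sdiff.2 ⟨ha, haB⟩)) ▸ Finset.mem_insert_self a B
        have hAeq : A = insert e B := Finset.eq_of_subset_of_card_le hsub (by
          rw [Finset.card_insert_of_notMem (Finset.mem_sdiff.1 he).2]; omega)
        exact ⟨e, he, hAeq ▸ (⟨TA, hTAX, hATA⟩ : A ∈ Ind)⟩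
  · rintro A ⟨T, hT, hAT⟩
    exact hT.1 ▸ Finset.card_le_card hAT
end

section
/- Let n ≥ 3 be an integer, k an integer with 0 ≤ k ≤ n, and F a family of k-element subsets of [n]. If F = ∅, then there is no set T with T ∈ bases(I^∩_{L,1}), T ∈ bases(I*), and |T ∩ R| = k. -/
/-- The set `X(S) = {(s,1) : s ∈ S} ∪ {(s̄,2) : s̄ ∈ [n] \ S}` inside the grid
`[n] × [n]` (columns `1` and `2` are represented by the `Fin n` values `0` and `1`). -/
def XS (n : ℕ) (S : Finset (Fin n)) : Finset (Fin n × Fin n) :=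
  Finset.univ.filter fun e => ((e.2 : ℕ) = 0 ∧ e.1 ∈ S) ∨ ((e.2 : ℕ) = 1 ∧ e.1 ∉ S)

/-- `T ⊆ [n] × [n]` is `L`-perfect for the matrix `L` given by `L_{i,1} = 1` for all
`i`, `L_{1,2} = k`, `L_{2,2} = n - k`, and `L_{i,2} = 0` otherwise. -/
def LPerfect (n k : ℕ) (T : Finset (Fin n × Fin n)) : Prop :=
  (∀ i : Fin n, (T.filter fun e => e.1 = i).card = 1) ∧
  (T.filter fun e => (e.2 : ℕ) = 0).card = k ∧
  (T.filter fun e => (e.2 : ℕ) = 1).card = n - k ∧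
  (∀ i : Fin n, 2 ≤ (i : ℕ) → (T.filter fun e => e.2 = i).card = 0)

/-- The red elements `R = {(i,1) : i ∈ [n]}`. -/
def Red (n : ℕ) : Finset (Fin n × Fin n) :=
  Finset.univ.filter fun e => (e.2 : ℕ) = 0

/-- The ground set `E = R ∪ Bl`, the first two columns of the grid. -/
def Egr (n : ℕ) : Finset (Fin n × Fin n) :=
  Finset.univ.filter fun e => (e.2 : ℕ) = 0 ∨ (e.2 : ℕ) = 1

/-- `G = {X(S) : S ∈ F}`. -/
def GFam (n : ℕ) (F : Set (Finset (Fin n))) : Set (Finset (Fin n × Fin n)) :=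
  XS n '' F

/-- `X = {T ⊆ grid : |T| = n and (T is not L-perfect, or T ∈ G)}`. -/
def XFam (n k : ℕ) (F : Set (Finset (Fin n))) : Set (Finset (Fin n × Fin n)) :=
  {T | T.card = n ∧ (¬ LPerfect n k T ∨ T ∈ GFam n F)}

/-- `I(X) = {T : T ⊆ T' for some T' ∈ X}`. -/
def IofX (n k : ℕ) (F : Set (Finset (Fin n))) : Set (Finset (Fin n × Fin n)) :=
  {T | ∃ B ∈ XFam n k F, T ⊆ B}

/-- `I* = {T ⊆ E : T ∈ I(X)}`, the restriction of the `G`-matroid to `E`. -/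
def Istar (n k : ℕ) (F : Set (Finset (Fin n))) : Set (Finset (Fin n × Fin n)) :=
  {T | T ⊆ Egr n ∧ T ∈ IofX n k F}

/-- `I_{L,1} = {T ⊆ grid : at most one element of each row}`. -/
def IL1 (n : ℕ) : Set (Finset (Fin n × Fin n)) :=
  {T | ∀ i : Fin n, (T.filter fun e => e.1 = i).card ≤ 1}

/-- `I^∩_{L,1} = {T ⊆ E : T ∈ I_{L,1}}`. -/
def IL1cap (n : ℕ) : Set (Finset (Fin n × Fin n)) :=
  {T | T ⊆ Egr n ∧ T ∈ IL1 n}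

/-- Claim 5.5: if `F = ∅` then there is no common basis `T` of
`I^∩_{L,1}` and `I*` with exactly `k` red elements. -/
theorem stmt11 (n k : ℕ) (hn : 3 ≤ n) (hk : k ≤ n)
    (F : Set (Finset (Fin n))) (hF : ∀ S ∈ F, S.card = k) (hFempty : F = ∅) :
    ¬ ∃ T : Finset (Fin n × Fin n),
        IsBasisOf (IL1cap n) T ∧ IsBasisOf (Istar n k F) T ∧
        (T ∩ Red n).card = k := by
  rintro ⟨T, ⟨⟨hTE, hT1⟩, hTmax⟩, ⟨⟨_, B, hBX, hTB⟩, _⟩, hTR⟩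
  -- Red n is in IL1cap with card n
  have hRedE : Red n ⊆ Egr n := by
    intro e he
    simp only [Red, Egr, Finset.mem_filter, Finset.mem_univ, true_and] at he ⊢
    exact Or.inl he
  have hRed1 : ∀ i : Fin n, ((Red n).filter fun e => e.1 = i).card = 1 := by
    intro i
    have : (Red n).filter (fun e => e.1 = i) = {(i, ⟨0, by omega⟩)} := by
      ext e
      simp only [Red, Finset.mem_filter, Finset.mem_univ, true_and, Finset.mem_singleton]
      constructor
      · rintro ⟨h2, h1⟩
        exact Prod.ext h1 (Fin.ext (by simpa using h2))
      · rintro rfl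
        exact ⟨rfl, rfl⟩
    rw [this, Finset.card_singleton]
  have hRedcard : (Red n).card = n := by
    have := Finset.card_eq_sum_card_fiberwise
      (f := Prod.fst) (s := Red n) (t := Finset.univ) (fun x _ => Finset.mem_univ _)
    simp only [hRed1, Finset.sum_const, smul_eq_mul, mul_one, Finset.card_univ,
      Fintype.card_fin] at this
    exact this
  have hRedIn : Red n ∈ IL1cap n := ⟨hRedE, fun i => le_of_eq (hRed1 i)⟩
  have hTle : T.card ≤ n := by
    have := Finset.card_eq_sum_card_fiberwise
      (f := Prod.fst) (s := T) (t := Finset.univ) (fun x _ => Finset.mem_univ _)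
    rw [this]
    calc ∑ i : Fin n, (T.filter fun e => e.1 = i).card
        ≤ ∑ _i : Fin n, 1 := Finset.sum_le_sum (fun i _ => hT1 i)
      _ = n := by simp
  have hTcard : T.card = n := le_antisymm hTle (by have := hTmax _ hRedIn; omega)
  -- T = B
  obtain ⟨hBn, hBbad⟩ := hBX
  have hTeq : T = B := Finset.eq_of_subset_of_card_le hTB (by rw [hTcard, hBn])
  have hBad : ¬ LPerfect n k B := by
    rcases hBbad with h | h
    · exact h
    · exfalso; rw [hFempty] at h; simp [GFam] at h
  apply hBad
  rw [← hTeq]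
  -- T is L-perfect
  have hrow : ∀ i : Fin n, (T.filter fun e => e.1 = i).card = 1 := by
    intro i
    have hsum := Finset.card_eq_sum_card_fiberwise
      (f := Prod.fst) (s := T) (t := Finset.univ) (fun x _ => Finset.mem_univ _)
    by_contra h
    have h0 : (T.filter fun e => e.1 = i).card = 0 := by
      have := hT1 i; omega
    have : T.card ≤ (Finset.univ.erase i).card := by
      rw [hsum, ← Finset.sum_erase_add _ _ (Finset.mem_univ i), h0, add_zero]
      calc ∑ j ∈ Finset.univ.erase i, (T.filter fun e => e.1 = j).card
          ≤ ∑ _j ∈ Finset.univ.erase i, 1 := Finset.sum_le_sum (fun j _ => hT1 j)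
        _ = (Finset.univ.erase i).card := by simp
    rw [hTcard, Finset.card_erase_of_mem (Finset.mem_univ i), Finset.card_univ,
      Fintype.card_fin] at this
    omega
  have hcol0 : (T.filter fun e => (e.2 : ℕ) = 0).card = k := by
    rw [← hTR]
    congr 1
    ext e
    simp [Red, Finset.mem_filter, Finset.mem_inter, and_comm]
  have hcol1 : (T.filter fun e => (e.2 : ℕ) = 1).card = n - k := by
    have hsplit := Finset.card_filter_add_card_filter_not
      (s := T) (p := fun e => (e.2 : ℕ) = 0)
    have : (T.filter fun e => ¬ (e.2 : ℕ) = 0) = T.filter fun e => (e.2 : ℕ) = 1 := by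
      apply Finset.filter_congr
      intro e he
      have := hTE he
      simp only [Egr, Finset.mem_filter, Finset.mem_univ, true_and] at this
      constructor
      · intro h; rcases this with h0 | h1
        · exact absurd h0 h
        · simpa using h1
      · intro h; simp [h]
    rw [this] at hsplit
    omega
  refine ⟨hrow, hcol0, hcol1, ?_⟩
  intro i hi
  rw [Finset.card_eq_zero, Finset.filter_eq_empty_iff]
  intro e he h2
  have := hTE he
  simp only [Egr, Finset.mem_filter, Finset.mem_univ, true_and] at this
  subst h2
  omega
end

section
/- Let n ≥ 3 be an integer, k an integer with 0 ≤ k ≤ n, and F a family of k-element subsets of [n]. Then F ≠ ∅ if and only if there exists a set T with T ∈ bases(I^∩_{L,1}), T ∈ bases(I*), and |T ∩ R| = k. -/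
/-!
For `S ∈ F`, the set `X(S)` has one element in each row of the first two columns and exactly
`|S| = k` red ones, so it is a common basis of both families. Conversely, a common basis `T`
has `n` elements, one per row, all in the first two columns; having `k` red ones makes it
`L`-perfect. Being of size `n`, it equals the member of `X` containing it, and a perfect member
of `X` lies in `G`, so it is `X(S)` for some `S ∈ F`.
-/

section Fibers

variable {α β : Type*} [Fintype α] [DecidableEq α] {T : Finset (α × β)}

lemma card_le_of_card_filter_fst_le_one (hT : ∀ i, (T.filter fun e => e.1 = i).card ≤ 1) :
    T.card ≤ Fintype.card α := by
  rw [Finset.card_eq_sum_card_fiberwise fun e _ => Finset.mem_univ e.1]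
  simpa using Finset.sum_le_sum fun i (_ : i ∈ Finset.univ) => hT i

lemma card_filter_fst_eq_one_of_card_eq (hT : ∀ i, (T.filter fun e => e.1 = i).card ≤ 1)
    (hcard : T.card = Fintype.card α) (i : α) : (T.filter fun e => e.1 = i).card = 1 := by
  rw [Finset.card_eq_sum_card_fiberwise fun e _ => Finset.mem_univ e.1] at hcard
  have hsum : ∑ j, (T.filter fun e => e.1 = j).card = ∑ _j : α, 1 := by simpa using hcard
  exact (Finset.sum_eq_sum_iff_of_le fun j _ => hT j).mp hsum i (Finset.mem_univ i)

end Fibers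

section XS

variable {n : ℕ}

def xsCol (hn : 2 ≤ n) (S : Finset (Fin n)) (i : Fin n) : Fin n :=
  if i ∈ S then ⟨0, by omega⟩ else ⟨1, by omega⟩

lemma mem_XS (hn : 2 ≤ n) (S : Finset (Fin n)) (e : Fin n × Fin n) :
    e ∈ XS n S ↔ e.2 = xsCol hn S e.1 := by
  by_cases h : e.1 ∈ S <;> simp [XS, xsCol, h, Fin.ext_iff]

lemma card_XS (hn : 2 ≤ n) (S : Finset (Fin n)) : (XS n S).card = n := by
  have hgraph : XS n S = Finset.univ.image fun i => (i, xsCol hn S i) := by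
    ext e
    simp [mem_XS hn, Prod.ext_iff, eq_comm]
  rw [hgraph, Finset.card_image_of_injective _ fun _ _ h => congrArg Prod.fst h,
    Finset.card_univ, Fintype.card_fin]

lemma card_filter_fst_XS (hn : 2 ≤ n) (S : Finset (Fin n)) (i : Fin n) :
    ((XS n S).filter fun e => e.1 = i).card = 1 := by
  rw [Finset.card_eq_one]
  exact ⟨(i, xsCol hn S i), by ext e; simp [mem_XS hn, Prod.ext_iff]; grind⟩

lemma card_XS_inter_Red (hn : 2 ≤ n) (S : Finset (Fin n)) : (XS n S ∩ Red n).card = S.card := by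
  have hred : XS n S ∩ Red n = S.image fun i => (i, (⟨0, by omega⟩ : Fin n)) := by
    ext ⟨a, b⟩
    simp only [XS, Red, Finset.mem_inter, Finset.mem_filter, Finset.mem_univ, true_and,
      Finset.mem_image, Prod.mk.injEq, Fin.ext_iff]
    grind
  rw [hred, Finset.card_image_of_injective _ fun _ _ h => congrArg Prod.fst h]

lemma XS_subset_Egr (S : Finset (Fin n)) : XS n S ⊆ Egr n := by
  intro e he
  simp only [XS, Egr, Finset.mem_filter, Finset.mem_univ, true_and] at he ⊢
  tauto

lemma XS_mem_IL1cap (hn : 2 ≤ n) (S : Finset (Fin n)) : XS n S ∈ IL1cap n :=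
  ⟨XS_subset_Egr S, fun i => (card_filter_fst_XS hn S i).le⟩

end XS

section Bases

variable {n k : ℕ} {F : Set (Finset (Fin n))} {T : Finset (Fin n × Fin n)}

lemma isBasisOf_of_card_eq {β : Type*} {I : Set (Finset β)} {S : Finset β} {m : ℕ}
    (hS : S ∈ I) (hI : ∀ T ∈ I, T.card ≤ m) (hcard : S.card = m) : IsBasisOf I S :=
  ⟨hS, fun T hT => hcard ▸ hI T hT⟩

lemma card_le_of_mem_IL1cap (hT : T ∈ IL1cap n) : T.card ≤ n := by
  simpa using card_le_of_card_filter_fst_le_one hT.2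

lemma XS_mem_Istar {S : Finset (Fin n)} (hn : 2 ≤ n) (hS : S ∈ F) : XS n S ∈ Istar n k F :=
  ⟨XS_subset_Egr S, XS n S, ⟨card_XS hn S, Or.inr ⟨S, hS, rfl⟩⟩, subset_rfl⟩

lemma card_le_of_mem_Istar (hT : T ∈ Istar n k F) : T.card ≤ n := by
  obtain ⟨-, B, hB, hTB⟩ := hT
  exact (Finset.card_le_card hTB).trans_eq hB.1

lemma card_eq_of_isBasisOf_IL1cap (hn : 2 ≤ n) (hT : IsBasisOf (IL1cap n) T) : T.card = n :=
  le_antisymm (card_le_of_mem_IL1cap hT.1)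
    ((card_XS hn ∅).symm.trans_le (hT.2 _ (XS_mem_IL1cap hn ∅)))

lemma lPerfect_of_mem_IL1cap (hT : T ∈ IL1cap n) (hcard : T.card = n)
    (hred : (T ∩ Red n).card = k) : LPerfect n k T := by
  obtain ⟨hTE, hrows⟩ := hT
  have hcol : ∀ e ∈ T, (e.2 : ℕ) = 0 ∨ (e.2 : ℕ) = 1 := fun e he => by
    simpa [Egr] using hTE he
  have hred' : (T.filter fun e => (e.2 : ℕ) = 0).card = k := by
    rw [← hred]; congr 1; ext e; simp [Red]
  refine ⟨card_filter_fst_eq_one_of_card_eq hrows (by simpa using hcard), hred', ?_, ?_⟩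
  · have hblue : (T.filter fun e => ¬(e.2 : ℕ) = 0) = T.filter fun e => (e.2 : ℕ) = 1 :=
      Finset.filter_congr fun e he => by have := hcol e he; omega
    have hsplit := Finset.card_filter_add_card_filter_not (s := T) (p := fun e => (e.2 : ℕ) = 0)
    rw [hblue] at hsplit
    omega
  · intro i hi
    rw [Finset.card_eq_zero, Finset.filter_eq_empty_iff]
    rintro e he rfl
    have := hcol e he
    omega

lemma mem_GFam_of_mem_Istar (hT : T ∈ Istar n k F) (hcard : T.card = n)
    (hperf : LPerfect n k T) : T ∈ GFam n F := by
  obtain ⟨-, B, ⟨hBcard, hB⟩, hTB⟩ := hT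
  obtain rfl : T = B := Finset.eq_of_subset_of_card_le hTB (by rw [hBcard, hcard])
  exact hB.resolve_left (not_not_intro hperf)

end Bases

theorem stmt12_general (n k : ℕ) (hn : 3 ≤ n)
    (F : Set (Finset (Fin n))) (hF : ∀ S ∈ F, S.card = k) :
    F.Nonempty ↔
      ∃ T : Finset (Fin n × Fin n),
        IsBasisOf (IL1cap n) T ∧ IsBasisOf (Istar n k F) T ∧
        (T ∩ Red n).card = k := by
  have hn2 : 2 ≤ n := by omega
  constructor
  · rintro ⟨S, hS⟩
    exact ⟨XS n S,
      isBasisOf_of_card_eq (XS_mem_IL1cap hn2 S) (fun _ => card_le_of_mem_IL1cap) (card_XS hn2 S),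
      isBasisOf_of_card_eq (XS_mem_Istar hn2 hS) (fun _ => card_le_of_mem_Istar) (card_XS hn2 S),
      (card_XS_inter_Red hn2 S).trans (hF S hS)⟩
  · rintro ⟨T, hTL, hTstar, hred⟩
    have hcard := card_eq_of_isBasisOf_IL1cap hn2 hTL
    obtain ⟨S, hS, -⟩ :=
      mem_GFam_of_mem_Istar hTstar.1 hcard (lPerfect_of_mem_IL1cap hTL.1 hcard hred)
    exact ⟨S, hS⟩

/-- Lemma 5.2: `F ≠ ∅` iff there is a common basis `T` of
`I^∩_{L,1}` and `I*` with exactly `k` red elements. -/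
theorem stmt12 (n k : ℕ) (hn : 3 ≤ n) (hk : k ≤ n)
    (F : Set (Finset (Fin n))) (hF : ∀ S ∈ F, S.card = k) :
    F.Nonempty ↔
      ∃ T : Finset (Fin n × Fin n),
        IsBasisOf (IL1cap n) T ∧ IsBasisOf (Istar n k F) T ∧
        (T ∩ Red n).card = k :=
  stmt12_general n k hn F hF
end

section
/- Let g : ℕ → ℕ be a function with g(0) = 1 and g(ℓ) ≥ 1 for all ℓ ∈ ℕ. Then for every integer n ≥ 1, Ψ_g(n) ≤ 2^{n − Φ_g(n) + log₂ n}. -/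
open Real Finset

/-- `Φ_g(n) = max_{0 ≤ ℓ ≤ n/4, ℓ ∈ ℕ} (ℓ·log₂(n/(4ℓ)) − log₂ g(ℓ))`.
(For `ℓ = 0` the first summand vanishes, so the term is `−log₂ g(0)`,
matching the convention `x/0 = 0`, `log₂ 0 = 0` of Lean.) -/
noncomputable def Phi (g : ℕ → ℕ) (n : ℕ) : ℝ :=
  (Finset.range (n / 4 + 1)).sup' (Finset.nonempty_range_iff.mpr (by omega))
    fun ℓ => (ℓ : ℝ) * Real.logb 2 ((n : ℝ) / (4 * ℓ)) - Real.logb 2 (g ℓ)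

/-- `Ψ_g(n) = max_{0 ≤ k ≤ n} min_{0 ≤ t ≤ k} (C(n,t)/C(k,t)) · g(k−t)`. -/
noncomputable def Psi (g : ℕ → ℕ) (n : ℕ) : ℝ :=
  (Finset.range (n + 1)).sup' (Finset.nonempty_range_iff.mpr (by omega)) fun k =>
    (Finset.range (k + 1)).inf' (Finset.nonempty_range_iff.mpr (by omega)) fun t =>
      ((n.choose t : ℝ) / (k.choose t : ℝ)) * (g (k - t) : ℝ)

/-!
Let `L` attain the maximum defining `Φ_g(n)` and put `X = n / (4L)`, so that
`2 ^ Φ_g(n) = X^L / g(L)`. For each `k` one value of `t` suffices. If `k ≤ L`, take `t = k`: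
the term is `C(n,k) ≤ C(n,L)` (as `L ≤ n/2`). If `k = t + L`, the identity
`C(n,k) C(k,t) = C(n,t) C(n-t,L)` turns the term into `C(n,k) g(L) / C(m,L)` with `m = n - t`.
Everything then reduces to `(m/L)^L ≤ C(m,L)` and to the estimate `C(n,s) (n/(4s))^s ≤ 2^n`
for `4s ≤ n`, which follows from `C(n,s) ≤ (e n/s)^s` and `4 e x² ≤ 16^x` for `x = n/(4s) ≥ 1`:
when `n ≤ 4m` one uses `X ≤ m/L`, and when `4m < n` one splits `X = (n/(4m)) (m/L)` and
applies the estimate with `s = m`.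
-/

namespace Nat

open scoped Nat

theorem choose_le_choose_of_le_half {n a b : ℕ} (hab : a ≤ b) (hb : b ≤ n / 2) :
    n.choose a ≤ n.choose b := by
  induction b, hab using Nat.le_induction with
  | base => rfl
  | succ b _ ih => exact (ih (by omega)).trans (choose_le_succ_of_lt_half_left (by omega))

theorem pow_mul_factorial_le_pow_mul_descFactorial {m ℓ : ℕ} (h : ℓ ≤ m) :
    m ^ ℓ * ℓ ! ≤ ℓ ^ ℓ * m.descFactorial ℓ := by
  have hconst (a : ℕ) : a ^ ℓ = ∏ _i ∈ range ℓ, a := by simp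
  rw [← descFactorial_self, descFactorial_eq_prod_range, descFactorial_eq_prod_range, hconst m,
    hconst ℓ, ← prod_mul_distrib, ← prod_mul_distrib]
  refine prod_le_prod' fun i hi => ?_
  have hi : i < ℓ := mem_range.mp hi
  zify [hi.le, (hi.trans_le h).le]
  nlinarith

theorem div_pow_le_choose {m ℓ : ℕ} (h : ℓ ≤ m) : ((m : ℝ) / ℓ) ^ ℓ ≤ m.choose ℓ := by
  rcases ℓ.eq_zero_or_pos with rfl | hℓ
  · simp
  have key := pow_mul_factorial_le_pow_mul_descFactorial h
  rw [descFactorial_eq_factorial_mul_choose, mul_left_comm, mul_comm (m ^ ℓ)] at key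
  have key' : m ^ ℓ ≤ ℓ ^ ℓ * m.choose ℓ := Nat.le_of_mul_le_mul_left key (factorial_pos ℓ)
  rw [div_pow, div_le_iff₀ (by positivity), mul_comm]
  exact_mod_cast key'

theorem choose_le_exp_one_mul_div_pow (n s : ℕ) :
    (n.choose s : ℝ) ≤ (exp 1 * n / s) ^ s := by
  rcases s.eq_zero_or_pos with rfl | hs
  · simp
  calc (n.choose s : ℝ) ≤ n ^ s / s ! := choose_le_pow_div s n
    _ = ((n : ℝ) / s) ^ s * ((s : ℝ) ^ s / s !) := by rw [div_pow]; field_simp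
    _ ≤ ((n : ℝ) / s) ^ s * exp s := by gcongr; exact pow_div_factorial_le_exp _ s.cast_nonneg s
    _ = (exp 1 * n / s) ^ s := by rw [← exp_one_pow, ← mul_pow]; ring

end Nat

theorem four_mul_exp_one_mul_sq_le_exp {x : ℝ} (hx : 1 ≤ x) :
    4 * exp 1 * x ^ 2 ≤ exp (4 * log 2 * x) := by
  rw [← exp_log (by positivity : 0 < 4 * exp 1 * x ^ 2), exp_le_exp, log_mul (by positivity)
    (by positivity), log_mul (by norm_num) (by positivity), log_exp, log_pow,
    show (4 : ℝ) = 2 ^ 2 by norm_num, log_pow]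
  have hlog := log_le_sub_one_of_pos (by linarith : 0 < x)
  have hlog2 := log_two_gt_d9
  push_cast
  nlinarith

theorem choose_mul_div_pow_le_two_pow {n s : ℕ} (h : 4 * s ≤ n) :
    (n.choose s : ℝ) * (n / (4 * s)) ^ s ≤ 2 ^ n := by
  rcases s.eq_zero_or_pos with rfl | hs
  · simpa using one_le_pow₀ one_le_two
  set x : ℝ := n / (4 * s) with hx
  have hn : (n : ℝ) = 4 * x * s := by rw [hx]; field_simp
  have hx1 : 1 ≤ x := by
    rw [hx, le_div_iff₀ (by positivity), one_mul]; exact_mod_cast h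
  calc (n.choose s : ℝ) * x ^ s ≤ (exp 1 * n / s) ^ s * x ^ s := by
        gcongr; exact Nat.choose_le_exp_one_mul_div_pow n s
    _ = (4 * exp 1 * x ^ 2) ^ s := by rw [← mul_pow, hn]; field_simp
    _ ≤ exp (4 * log 2 * x) ^ s := by gcongr; exact four_mul_exp_one_mul_sq_le_exp hx1
    _ = 2 ^ n := by
      rw [← exp_nat_mul, ← exp_log (two_pos : (0 : ℝ) < 2), ← exp_nat_mul, exp_log two_pos, hn]
      ring_nf

section ChooseDivPow

variable {n ℓ : ℕ}

theorem choose_mul_div_pow_le_two_pow_of_le {k : ℕ} (hk : k ≤ ℓ) (hℓ : 4 * ℓ ≤ n) :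
    (n.choose k : ℝ) * (n / (4 * ℓ)) ^ ℓ ≤ 2 ^ n := by
  have hchoose : (n.choose k : ℝ) ≤ n.choose ℓ :=
    mod_cast Nat.choose_le_choose_of_le_half hk (by omega)
  exact (mul_le_mul_of_nonneg_right hchoose (by positivity)).trans
    (choose_mul_div_pow_le_two_pow hℓ)

theorem choose_mul_div_pow_le_two_pow_mul_choose {k m : ℕ} (hℓm : ℓ ≤ m) (hkm : n ≤ k + m)
    (hkn : k ≤ n) : (n.choose k : ℝ) * (n / (4 * ℓ)) ^ ℓ ≤ 2 ^ n * m.choose ℓ := by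
  rcases ℓ.eq_zero_or_pos with rfl | hℓ
  · simp only [pow_zero, mul_one, Nat.choose_zero_right, Nat.cast_one]
    exact_mod_cast Nat.choose_le_two_pow n k
  have hm : 0 < m := hℓ.trans_le hℓm
  rcases le_or_gt n (4 * m) with hnm | hnm
  · have hnm' : (n : ℝ) ≤ 4 * m := mod_cast hnm
    have hX : (n : ℝ) / (4 * ℓ) ≤ m / ℓ := by
      rw [← div_div]; gcongr; linarith
    gcongr
    · exact_mod_cast Nat.choose_le_two_pow n k
    · exact (pow_le_pow_left₀ (by positivity) hX ℓ).trans (Nat.div_pow_le_choose hℓm)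
  · set y : ℝ := n / (4 * m)
    have hy : 1 ≤ y := by
      rw [le_div_iff₀ (by positivity), one_mul]; exact_mod_cast hnm.le
    have hchoose : (n.choose k : ℝ) ≤ n.choose m := by
      rw [← Nat.choose_symm hkn]
      exact_mod_cast Nat.choose_le_choose_of_le_half (by omega) (by omega)
    have hX : (n : ℝ) / (4 * ℓ) = y * (m / ℓ) := by simp only [y]; field_simp
    calc (n.choose k : ℝ) * (n / (4 * ℓ)) ^ ℓ = n.choose k * y ^ ℓ * (m / ℓ) ^ ℓ := by
          rw [hX, mul_pow, mul_assoc]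
      _ ≤ n.choose m * y ^ m * m.choose ℓ := by
          gcongr
          exact Nat.div_pow_le_choose hℓm
      _ ≤ 2 ^ n * m.choose ℓ := by
          gcongr; exact choose_mul_div_pow_le_two_pow (by omega)

theorem choose_div_choose_mul_div_pow_le_two_pow {t : ℕ} (h : t + ℓ ≤ n) :
    (n.choose t : ℝ) / (t + ℓ).choose t * (n / (4 * ℓ)) ^ ℓ ≤ 2 ^ n := by
  have hpos : (0 : ℝ) < (t + ℓ).choose t := mod_cast Nat.choose_pos (by omega)
  have hpos' : (0 : ℝ) < (n - t).choose ℓ := mod_cast Nat.choose_pos (by omega)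
  have hid : (n.choose (t + ℓ) : ℝ) * (t + ℓ).choose t = n.choose t * (n - t).choose ℓ := by
    have := Nat.choose_mul (n := n) (k := t + ℓ) (s := t) (by omega)
    rw [Nat.add_sub_cancel_left] at this
    exact_mod_cast this
  have key := choose_mul_div_pow_le_two_pow_mul_choose (k := t + ℓ) (m := n - t) (ℓ := ℓ)
    (by omega) (by omega) h
  rw [div_mul_eq_mul_div, div_le_iff₀ hpos]
  refine le_of_mul_le_mul_right ?_ hpos'
  calc (n.choose t : ℝ) * (n / (4 * ℓ)) ^ ℓ * (n - t).choose ℓ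
      = n.choose (t + ℓ) * (n / (4 * ℓ)) ^ ℓ * (t + ℓ).choose t := by
        rw [mul_right_comm, ← hid]; ring
    _ ≤ 2 ^ n * (n - t).choose ℓ * (t + ℓ).choose t := by gcongr
    _ = 2 ^ n * (t + ℓ).choose t * (n - t).choose ℓ := by ring

theorem div_pow_pos_of_four_mul_le (hℓ : 4 * ℓ ≤ n) : (0 : ℝ) < (n / (4 * ℓ)) ^ ℓ := by
  rcases ℓ.eq_zero_or_pos with rfl | hℓ'
  · simp
  have : (0 : ℝ) < n := mod_cast (by omega : 0 < n)
  positivity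

end ChooseDivPow

theorem psi_le_two_pow_mul_div {g : ℕ → ℕ} {n ℓ : ℕ} (hg0 : g 0 = 1) (hgℓ : 1 ≤ g ℓ)
    (hℓ : 4 * ℓ ≤ n) : Psi g n ≤ 2 ^ n * g ℓ / (n / (4 * ℓ)) ^ ℓ := by
  have hX := div_pow_pos_of_four_mul_le hℓ
  refine sup'_le _ _ fun k hk => ?_
  rw [le_div_iff₀ hX]
  rcases le_total k ℓ with hkℓ | hℓk
  · refine (mul_le_mul_of_nonneg_right (inf'_le _ (self_mem_range_succ k)) hX.le).trans ?_
    simp only [Nat.choose_self, Nat.sub_self, hg0, Nat.cast_one, div_one, mul_one]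
    calc (n.choose k : ℝ) * (n / (4 * ℓ)) ^ ℓ ≤ 2 ^ n :=
          choose_mul_div_pow_le_two_pow_of_le hkℓ hℓ
      _ ≤ 2 ^ n * g ℓ := le_mul_of_one_le_right (by positivity) (mod_cast hgℓ)
  · obtain ⟨t, rfl⟩ := Nat.exists_eq_add_of_le' hℓk
    have ht : t ∈ range (t + ℓ + 1) := mem_range.mpr (by omega)
    refine (mul_le_mul_of_nonneg_right (inf'_le _ ht) hX.le).trans ?_
    rw [Nat.add_sub_cancel_left, mul_right_comm]
    gcongr
    exact choose_div_choose_mul_div_pow_le_two_pow (by simpa using hk)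

theorem two_rpow_mul_logb_div_sub_logb {n ℓ : ℕ} (hℓ : 4 * ℓ ≤ n) {y : ℝ} (hy : 0 < y) :
    (2 : ℝ) ^ ((ℓ : ℝ) * logb 2 (n / (4 * ℓ)) - logb 2 y) = (n / (4 * ℓ)) ^ ℓ / y := by
  have hX := div_pow_pos_of_four_mul_le hℓ
  rw [← logb_pow, ← logb_div hX.ne' hy.ne', rpow_logb two_pos (by norm_num) (div_pos hX hy)]

theorem stmt13_general (g : ℕ → ℕ) (hg0 : g 0 = 1) (hg : ∀ ℓ, 1 ≤ g ℓ) (n : ℕ) :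
    Psi g n ≤ (2 : ℝ) ^ ((n : ℝ) - Phi g n + Real.logb 2 n) := by
  obtain ⟨L, hL, hPhi⟩ := exists_mem_eq_sup' (nonempty_range_iff.mpr (Nat.succ_ne_zero (n / 4)))
    fun ℓ : ℕ => (ℓ : ℝ) * logb 2 ((n : ℝ) / (4 * ℓ)) - logb 2 (g ℓ)
  have hLn : 4 * L ≤ n := by have := mem_range.mp hL; omega
  have hlogn : 0 ≤ logb 2 (n : ℝ) := div_nonneg (log_natCast_nonneg n) (log_nonneg one_le_two)
  calc Psi g n ≤ 2 ^ n * g L / (n / (4 * L)) ^ L := psi_le_two_pow_mul_div hg0 (hg L) hLn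
    _ = 2 ^ ((n : ℝ) - Phi g n) := by
      rw [rpow_sub two_pos, rpow_natCast, Phi, hPhi,
        two_rpow_mul_logb_div_sub_logb hLn (mod_cast (hg L : 0 < g L)),
        div_div_eq_mul_div]
    _ ≤ 2 ^ ((n : ℝ) - Phi g n + logb 2 n) :=
      rpow_le_rpow_of_exponent_le one_le_two (le_add_of_nonneg_right hlogn)

/-- Lemma 6.12: `Ψ_g(n) ≤ 2^{n − Φ_g(n) + log₂ n}`. -/
theorem stmt13 (g : ℕ → ℕ) (hg0 : g 0 = 1) (hg : ∀ ℓ, 1 ≤ g ℓ) (n : ℕ) (hn : 1 ≤ n) :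
    Psi g n ≤ (2 : ℝ) ^ ((n : ℝ) - Phi g n + Real.logb 2 n) :=
  stmt13_general g hg0 hg n
end

section
/- Let g : ℕ → ℕ be a function with g(ℓ) ≥ 1 for all ℓ ∈ ℕ. Then for every integer n ≥ 1 and every integer k with n/4 ≤ k ≤ 3n/4, it holds that min over integers t with 0 ≤ t ≤ k of (C(n,t)/C(k,t))·g(k−t) is at most 2^{n − Φ_g(n) + log₂ n}. -/
open Real Finset

lemma choose_le_two_pow' (n t : ℕ) : (n.choose t : ℝ) ≤ 2 ^ n := by
  have : n.choose t ≤ 2 ^ n := by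
    rcases le_or_gt t n with h | h
    · calc n.choose t ≤ ∑ i ∈ Finset.range (n+1), n.choose i :=
          Finset.single_le_sum (f := fun i => n.choose i) (fun _ _ => Nat.zero_le _)
            (Finset.mem_range.mpr (by omega))
      _ = 2 ^ n := Nat.sum_range_choose n
    · rw [Nat.choose_eq_zero_of_lt h]; positivity
  exact_mod_cast this

lemma pow_div_le_choose : ∀ (ℓ : ℕ) (k : ℕ), ℓ ≤ k → ((k : ℝ) / (ℓ : ℝ)) ^ ℓ ≤ k.choose ℓ := by
  intro ℓ
  induction ℓ with
  | zero => intro k _; simp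
  | succ ℓ ih =>
    intro k hk
    rcases Nat.eq_zero_or_pos ℓ with h0 | hpos
    · subst h0; simp
    · obtain ⟨m, rfl⟩ : ∃ m, k = m + 1 := ⟨k - 1, by omega⟩
      have hℓm : ℓ ≤ m := by omega
      have ihm := ih m hℓm
      have hℓpos : (0:ℝ) < (ℓ:ℝ) := by exact_mod_cast hpos
      have hchoose : ((m+1).choose (ℓ+1) : ℝ) = (m+1) * (m.choose ℓ : ℝ) / (ℓ+1) := by
        have h := Nat.add_one_mul_choose_eq m ℓ
        have h2 : ((m+1) * m.choose ℓ : ℕ) = ((m+1).choose (ℓ+1) * (ℓ+1) : ℕ) := by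
          simpa [Nat.succ_eq_add_one] using h
        have h3 : ((m:ℝ)+1) * (m.choose ℓ : ℝ) = ((m+1).choose (ℓ+1) : ℝ) * ((ℓ:ℝ)+1) := by
          exact_mod_cast h2
        field_simp
        linarith [h3]
      have hbase : ((m:ℝ)+1)/((ℓ:ℝ)+1) ≤ (m:ℝ)/(ℓ:ℝ) := by
        rw [div_le_div_iff₀ (by positivity) hℓpos]
        have : (ℓ:ℝ) ≤ m := by exact_mod_cast hℓm
        nlinarith
      have h1 : (0:ℝ) ≤ ((m:ℝ)+1)/((ℓ:ℝ)+1) := by positivity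
      have key : (((m:ℝ)+1)/((ℓ:ℝ)+1)) ^ (ℓ+1) ≤ ((m:ℝ)+1) * (m.choose ℓ : ℝ) / ((ℓ:ℝ)+1) := by
        calc (((m:ℝ)+1)/((ℓ:ℝ)+1)) ^ (ℓ+1)
            = (((m:ℝ)+1)/((ℓ:ℝ)+1)) * (((m:ℝ)+1)/((ℓ:ℝ)+1)) ^ ℓ := by ring
          _ ≤ (((m:ℝ)+1)/((ℓ:ℝ)+1)) * ((m:ℝ)/(ℓ:ℝ)) ^ ℓ := by
              exact mul_le_mul_of_nonneg_left (pow_le_pow_left₀ h1 hbase ℓ) h1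
          _ ≤ (((m:ℝ)+1)/((ℓ:ℝ)+1)) * (m.choose ℓ : ℝ) := mul_le_mul_of_nonneg_left ihm h1
          _ = ((m:ℝ)+1) * (m.choose ℓ : ℝ) / ((ℓ:ℝ)+1) := by ring
      rw [hchoose]
      push_cast at key ⊢
      convert key using 2

/-- Claim 6.14: if `n/4 ≤ k ≤ 3n/4` then
`min_{0 ≤ t ≤ k} (C(n,t)/C(k,t)) · g(k−t) ≤ 2^{n − Φ_g(n) + log₂ n}`. -/
theorem stmt15 (g : ℕ → ℕ) (hg : ∀ ℓ, 1 ≤ g ℓ) (n k : ℕ) (hn : 1 ≤ n)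
    (hk1 : (n : ℝ) / 4 ≤ (k : ℝ)) (hk2 : (k : ℝ) ≤ 3 * (n : ℝ) / 4) :
    (Finset.range (k + 1)).inf' (Finset.nonempty_range_iff.mpr (by omega))
      (fun t => ((n.choose t : ℝ) / (k.choose t : ℝ)) * (g (k - t) : ℝ))
      ≤ (2 : ℝ) ^ ((n : ℝ) - Phi g n + Real.logb 2 n) := by

  obtain ⟨ℓ, hℓmem, hΦ⟩ := Finset.exists_mem_eq_sup'
    (Finset.nonempty_range_iff.mpr (show n / 4 + 1 ≠ 0 by omega))
    (fun ℓ => (ℓ : ℝ) * Real.logb 2 ((n : ℝ) / (4 * ℓ)) - Real.logb 2 (g ℓ))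
  rw [Finset.mem_range] at hℓmem
  have hℓn4 : ℓ ≤ n / 4 := by omega
  have hℓk : ℓ ≤ k := by
    have h4 : (n:ℝ) ≤ 4 * k := by linarith
    have hnk : n ≤ 4 * k := by exact_mod_cast h4
    omega
  have htk : k - ℓ ∈ Finset.range (k+1) := Finset.mem_range.mpr (by omega)
  refine le_trans (Finset.inf'_le _ htk) ?_
  have hkt : k - (k - ℓ) = ℓ := by omega
  have hsymm : k.choose (k - ℓ) = k.choose ℓ := Nat.choose_symm hℓk
  simp only [hkt, hsymm]
  set L := Real.logb 2 ((n : ℝ) / (4 * ℓ)) with hL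
  set A := (2:ℝ) ^ ((ℓ:ℝ) * L) with hA
  have hApos : 0 < A := Real.rpow_pos_of_pos two_pos _
  have hnpos : (0:ℝ) < n := by exact_mod_cast hn
  have hgpos : (0:ℝ) < g ℓ := by exact_mod_cast hg ℓ
  have hAle : A ≤ k.choose ℓ := by
    rcases Nat.eq_zero_or_pos ℓ with h0 | hpos
    · subst h0; simp [hA]
    · have hℓpos : (0:ℝ) < (ℓ:ℝ) := by exact_mod_cast hpos
      have hxpos : (0:ℝ) < (n:ℝ) / (4 * ℓ) := by positivity
      have : A = ((n:ℝ) / (4 * ℓ)) ^ ℓ := by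
        rw [hA, hL, mul_comm ((ℓ:ℝ)) _, Real.rpow_mul (by norm_num),
          Real.rpow_logb two_pos (by norm_num) hxpos, Real.rpow_natCast]
      rw [this]
      calc ((n:ℝ) / (4 * ℓ)) ^ ℓ ≤ ((k:ℝ) / ℓ) ^ ℓ := by
            apply pow_le_pow_left₀ (le_of_lt hxpos)
            rw [div_le_div_iff₀ (by positivity) hℓpos]
            nlinarith
        _ ≤ k.choose ℓ := pow_div_le_choose ℓ k hℓk
  have hRHS : (2 : ℝ) ^ ((n : ℝ) - Phi g n + Real.logb 2 n)
      = 2 ^ (n:ℝ) * n * g ℓ / A := by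
    rw [show Phi g n = (ℓ:ℝ) * L - Real.logb 2 (g ℓ) from hΦ]
    have : (n:ℝ) - ((ℓ:ℝ) * L - Real.logb 2 (g ℓ)) + Real.logb 2 n
        = (n:ℝ) + Real.logb 2 n + Real.logb 2 (g ℓ) - (ℓ:ℝ) * L := by ring
    rw [this, Real.rpow_sub two_pos, Real.rpow_add two_pos, Real.rpow_add two_pos,
      Real.rpow_logb two_pos (by norm_num) hnpos,
      Real.rpow_logb two_pos (by norm_num) hgpos]
  rw [hRHS]
  have h2n : (2:ℝ) ^ (n:ℝ) = 2 ^ n := by rw [Real.rpow_natCast]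
  calc (n.choose (k-ℓ) : ℝ) / (k.choose ℓ : ℝ) * (g ℓ : ℝ)
      = (n.choose (k-ℓ) : ℝ) * (g ℓ : ℝ) / (k.choose ℓ : ℝ) := by ring
    _ ≤ 2 ^ (n:ℝ) * n * g ℓ / A := by
        apply div_le_div₀ (by positivity) ?_ hApos hAle
        rw [h2n]
        have h1 : (n.choose (k-ℓ) : ℝ) ≤ 2 ^ n := choose_le_two_pow' n (k-ℓ)
        have hn1 : (1:ℝ) ≤ n := by exact_mod_cast hn
        have h2 : (n.choose (k-ℓ) : ℝ) * g ℓ ≤ 2 ^ n * g ℓ :=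
          mul_le_mul_of_nonneg_right h1 hgpos.le
        nlinarith [mul_nonneg (mul_nonneg (pow_pos (show (0:ℝ) < 2 by norm_num) n).le
          hgpos.le) (sub_nonneg.mpr hn1)]
end

section
/- Let α > 0 and define g_α : ℕ → ℕ by g_α(ℓ) = ⌊2^{α·ℓ·log₂ ℓ}⌋ for ℓ ≥ 2 and g_α(0) = g_α(1) = 1. Then Φ_{g_α}(n) = Ω(n^{1/(1+α)}); that is, there exist a constant c > 0 and N ∈ ℕ such that Φ_{g_α}(n) ≥ c·n^{1/(1+α)} for every integer n ≥ N. -/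
open Real Finset

/-!
Take `ℓ = ⌊(n/8)^{1/(1+α)}⌋`. Then `ℓ^{1+α} ≤ n/8`, i.e. `n/(4ℓ) ≥ 2ℓ^α`, so
`ℓ·log₂(n/(4ℓ)) ≥ ℓ + α·ℓ·log₂ ℓ ≥ ℓ + log₂ g_α(ℓ)`: the term of `Φ` at `ℓ` is at least
`ℓ ≥ (n/8)^{1/(1+α)}/2`.
-/

lemma term_le_Phi (g : ℕ → ℕ) {n ℓ : ℕ} (hℓ : ℓ ≤ n / 4) :
    (ℓ : ℝ) * logb 2 ((n : ℝ) / (4 * ℓ)) - logb 2 (g ℓ) ≤ Phi g n :=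
  Finset.le_sup' (fun ℓ : ℕ => (ℓ : ℝ) * logb 2 ((n : ℝ) / (4 * ℓ)) - logb 2 (g ℓ))
    (Finset.mem_range_succ_iff.mpr hℓ)

lemma Real.logb_natFloor_le {b x : ℝ} (hb : 1 < b) (hx : 1 ≤ x) : logb b ⌊x⌋₊ ≤ logb b x :=
  logb_le_logb_of_le hb (by exact_mod_cast Nat.floor_pos.mpr hx) (Nat.floor_le (by linarith))

lemma Nat.half_le_floor {K : Type*} [Field K] [LinearOrder K] [IsStrictOrderedRing K]
    [FloorSemiring K] {x : K} (hx : 2 ≤ x) : x / 2 ≤ ⌊x⌋₊ := by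
  linarith [Nat.sub_one_lt_floor x]

section FloorRoot

variable {q y : ℝ}

lemma natFloor_rpow_inv_rpow_le (hq : 0 < q) (hy : 0 ≤ y) : (⌊y ^ q⁻¹⌋₊ : ℝ) ^ q ≤ y :=
  (le_rpow_inv_iff_of_pos (Nat.cast_nonneg _) hy hq).mp (Nat.floor_le (by positivity))

lemma two_le_natFloor_rpow_inv (hq : 0 < q) (hy : 2 ^ q ≤ y) : 2 ≤ ⌊y ^ q⁻¹⌋₊ :=
  Nat.le_floor <| by
    push_cast
    exact (le_rpow_inv_iff_of_pos zero_le_two ((by positivity : (0 : ℝ) ≤ 2 ^ q).trans hy) hq).mpr hy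

end FloorRoot

lemma le_mul_logb_div_sub {α ℓ n : ℝ} (hℓ : 0 < ℓ) (h : 8 * ℓ ^ (1 + α) ≤ n) :
    ℓ ≤ ℓ * logb 2 (n / (4 * ℓ)) - α * ℓ * logb 2 ℓ := by
  have hdiv : 2 * ℓ ^ α ≤ n / (4 * ℓ) := by
    rw [le_div_iff₀ (by positivity)]
    rw [rpow_add hℓ, rpow_one] at h
    linarith
  have hlog : 1 + α * logb 2 ℓ ≤ logb 2 (n / (4 * ℓ)) := by
    have := logb_le_logb_of_le one_lt_two (by positivity) hdiv
    rwa [logb_mul two_ne_zero (rpow_pos_of_pos hℓ α).ne', logb_self_eq_one one_lt_two,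
      logb_rpow_eq_mul_logb_of_pos hℓ] at this
  nlinarith

theorem stmt17_general (α : ℝ) (hα : 0 < α) (g : ℕ → ℕ)
    (hg : ∀ ℓ : ℕ, 2 ≤ ℓ →
      g ℓ = Nat.floor ((2 : ℝ) ^ (α * (ℓ : ℝ) * Real.logb 2 (ℓ : ℝ)))) :
    ∃ c : ℝ, 0 < c ∧ ∃ N : ℕ, ∀ n : ℕ, N ≤ n →
      c * (n : ℝ) ^ (1 / (1 + α)) ≤ Phi g n := by
  have hq : 0 < 1 + α := by linarith
  refine ⟨(1 / 8) ^ (1 / (1 + α)) / 2, by positivity, ⌈8 * (2 : ℝ) ^ (1 + α)⌉₊, fun n hn => ?_⟩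
  have hy : (2 : ℝ) ^ (1 + α) ≤ n / 8 := by
    rw [le_div_iff₀ (by norm_num), mul_comm]; exact Nat.ceil_le.mp hn
  rw [one_div (1 + α)]
  set ℓ := ⌊((n : ℝ) / 8) ^ (1 + α)⁻¹⌋₊
  have hℓ2 : 2 ≤ ℓ := two_le_natFloor_rpow_inv hq hy
  have hℓ1 : (1 : ℝ) ≤ ℓ := by exact_mod_cast hℓ2.trans' one_le_two
  have hℓpow : (ℓ : ℝ) ^ (1 + α) ≤ n / 8 := natFloor_rpow_inv_rpow_le hq (by positivity)
  have hℓn : ℓ ≤ n / 4 := by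
    have : (ℓ : ℝ) ≤ n / 8 :=
      (self_le_rpow_of_one_le hℓ1 (by linarith)).trans hℓpow
    have : 8 * ℓ ≤ n := by exact_mod_cast (by linarith : 8 * (ℓ : ℝ) ≤ n)
    omega
  have hlogℓ : 0 ≤ α * ℓ * logb 2 ℓ := by
    have := logb_nonneg one_lt_two hℓ1
    positivity
  calc (1 / 8) ^ (1 + α)⁻¹ / 2 * (n : ℝ) ^ (1 + α)⁻¹
      = ((n : ℝ) / 8) ^ (1 + α)⁻¹ / 2 := by
        rw [div_eq_mul_one_div (n : ℝ), mul_rpow (by positivity) (by norm_num)]; ring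
    _ ≤ ℓ := Nat.half_le_floor ((le_rpow_inv_iff_of_pos zero_le_two (by positivity) hq).mpr hy)
    _ ≤ ℓ * logb 2 (n / (4 * ℓ)) - α * ℓ * logb 2 ℓ :=
        le_mul_logb_div_sub (by positivity) (by linarith)
    _ ≤ ℓ * logb 2 (n / (4 * ℓ)) - logb 2 (g ℓ) := by
        rw [hg ℓ hℓ2]
        gcongr
        calc logb 2 ⌊(2 : ℝ) ^ (α * ℓ * logb 2 ℓ)⌋₊
            ≤ logb 2 ((2 : ℝ) ^ (α * ℓ * logb 2 ℓ)) :=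
              logb_natFloor_le one_lt_two (one_le_rpow one_le_two hlogℓ)
          _ = α * ℓ * logb 2 ℓ := logb_rpow two_pos (by norm_num)
    _ ≤ Phi g n := term_le_Phi g hℓn

/-- Lemma 6.5: for `g_α(ℓ) = ⌊2^{α·ℓ·log₂ ℓ}⌋` (with
`g_α(0) = g_α(1) = 1`), we have `Φ_{g_α}(n) = Ω(n^{1/(1+α)})`. -/
theorem stmt17 (α : ℝ) (hα : 0 < α) (g : ℕ → ℕ)
    (hg : ∀ ℓ : ℕ, 2 ≤ ℓ →
      g ℓ = Nat.floor ((2 : ℝ) ^ (α * (ℓ : ℝ) * Real.logb 2 (ℓ : ℝ))))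
    (hg0 : g 0 = 1) (hg1 : g 1 = 1) :
    ∃ c : ℝ, 0 < c ∧ ∃ N : ℕ, ∀ n : ℕ, N ≤ n →
      c * (n : ℝ) ^ (1 / (1 + α)) ≤ Phi g n :=
  stmt17_general α hα g hg
end

section
/- Let α > 0 and define g : ℕ → ℕ by g(ℓ) = ⌊2^{α·ℓ²}⌋. Then Φ_g(n) = Ω(log²(n)); that is, there exist a constant c > 0 and N ∈ ℕ such that Φ_g(n) ≥ c·(log₂ n)² for every integer n ≥ N. -/
open Real Finset

/-- Lemma 6.8: for `g(ℓ) = ⌊2^{α·ℓ²}⌋`, we have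
`Φ_g(n) = Ω(log²(n))`. -/
theorem stmt18 (α : ℝ) (hα : 0 < α) (g : ℕ → ℕ)
    (hg : ∀ ℓ : ℕ, g ℓ = Nat.floor ((2 : ℝ) ^ (α * (ℓ : ℝ) ^ 2))) :
    ∃ c : ℝ, 0 < c ∧ ∃ N : ℕ, ∀ n : ℕ, N ≤ n →
      c * (Real.logb 2 (n : ℝ)) ^ 2 ≤ Phi g n := by
  set β : ℝ := 1 / (8 * α) with hβdef
  clear_value β
  have hβ : 0 < β := by rw [hβdef]; positivity
  have hαβ : α * β = 1 / 8 := by rw [hβdef]; field_simp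
  have hlog2 : (0 : ℝ) < Real.log 2 := Real.log_pos one_lt_two
  -- eventual conditions
  have h1 : Filter.Tendsto (fun x : ℝ => Real.log x ^ 2 / (1 * x + 0))
      Filter.atTop (nhds 0) := Real.tendsto_pow_log_div_mul_add_atTop 1 0 2 one_ne_zero
  have h2 : ∀ᶠ x : ℝ in Filter.atTop,
      Real.log x ^ 2 / (1 * x + 0) < Real.log 2 ^ 2 / (16 * β ^ 2) :=
    h1.eventually_lt_const (by positivity)
  have h3 : ∀ᶠ x : ℝ in Filter.atTop, 2 / β ≤ Real.logb 2 x :=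
    (Real.tendsto_logb_atTop one_lt_two).eventually_ge_atTop _
  obtain ⟨M, hM⟩ := Filter.eventually_atTop.mp
    ((h2.and h3).and (Filter.eventually_ge_atTop (1 : ℝ)))
  refine ⟨β / 8, by positivity, ⌈M⌉₊, fun n hn => ?_⟩
  have hMn : M ≤ (n : ℝ) := le_trans (Nat.le_ceil M) (by exact_mod_cast hn)
  obtain ⟨⟨hA, hB⟩, hC⟩ := hM (n : ℝ) hMn
  set t : ℝ := Real.logb 2 (n : ℝ) with htdef
  clear_value t
  have ht : 2 / β ≤ t := hB
  have ht0 : 0 < t := lt_of_lt_of_le (by positivity) ht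
  have hβt2 : 2 ≤ β * t := by
    rw [div_le_iff₀ hβ] at ht; linarith [ht]
  have hn1 : (1 : ℝ) ≤ (n : ℝ) := hC
  have hn0 : (0 : ℝ) < (n : ℝ) := by linarith
  -- key quantitative bound: 16 β² t² ≤ n
  have hkey : 16 * β ^ 2 * t ^ 2 ≤ (n : ℝ) := by
    have hcross : Real.log (n : ℝ) ^ 2 * (16 * β ^ 2) < Real.log 2 ^ 2 * (n : ℝ) := by
      have h := hA
      rw [show (1 * (n : ℝ) + 0) = (n : ℝ) by ring,
        div_lt_div_iff₀ hn0 (by positivity)] at h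
      exact h
    have ht2 : t ^ 2 = Real.log (n : ℝ) ^ 2 / Real.log 2 ^ 2 := by
      rw [htdef, Real.logb, div_pow]
    rw [ht2, ← mul_div_assoc, div_le_iff₀ (by positivity : (0:ℝ) < Real.log 2 ^ 2)]
    linarith
  set L : ℕ := ⌊β * t⌋₊ with hLdef
  clear_value L
  have hβt0 : 0 ≤ β * t := by positivity
  have hLle : (L : ℝ) ≤ β * t := hLdef ▸ Nat.floor_le hβt0
  have hLge : β * t - 1 ≤ (L : ℝ) := hLdef ▸ le_of_lt (Nat.sub_one_lt_floor _)
  have hLge2 : β * t / 2 ≤ (L : ℝ) := by linarith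
  have hL1 : (1 : ℝ) ≤ (L : ℝ) := by linarith
  have hL1' : 1 ≤ L := by exact_mod_cast hL1
  have hL0 : (0 : ℝ) < (L : ℝ) := by linarith
  -- (4L)^2 ≤ n
  have hsq : (4 * (L : ℝ)) ^ 2 ≤ (n : ℝ) := by nlinarith [hLle, hkey]
  have h4Ln : 4 * (L : ℝ) ≤ (n : ℝ) := by nlinarith [hL1]
  have hmem : L ∈ Finset.range (n / 4 + 1) := by
    rw [Finset.mem_range, Nat.lt_succ_iff, Nat.le_div_iff_mul_le (by norm_num)]
    have hnat : ((L : ℝ) * 4 : ℝ) ≤ (n : ℝ) := by linarith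
    exact_mod_cast hnat
  have hPhi := Finset.le_sup' (b := L)
    (fun ℓ : ℕ => (ℓ : ℝ) * Real.logb 2 ((n : ℝ) / (4 * ℓ)) - Real.logb 2 (g ℓ)) hmem
  rw [Phi]
  refine le_trans ?_ hPhi
  -- bound on logb 2 (g L)
  have hx1 : (1 : ℝ) ≤ (2 : ℝ) ^ (α * (L : ℝ) ^ 2) :=
    Real.one_le_rpow one_le_two (by positivity)
  have hgL : Real.logb 2 (g L) ≤ α * (L : ℝ) ^ 2 := by
    rw [hg L]
    have hfl : ((⌊(2 : ℝ) ^ (α * (L : ℝ) ^ 2)⌋₊ : ℕ) : ℝ) ≤ (2 : ℝ) ^ (α * (L : ℝ) ^ 2) :=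
      Nat.floor_le (by positivity)
    have hfl1 : (1 : ℝ) ≤ ((⌊(2 : ℝ) ^ (α * (L : ℝ) ^ 2)⌋₊ : ℕ) : ℝ) := by
      exact_mod_cast Nat.le_floor (by exact_mod_cast hx1)
    calc Real.logb 2 (⌊(2 : ℝ) ^ (α * (L : ℝ) ^ 2)⌋₊ : ℕ)
        ≤ Real.logb 2 ((2 : ℝ) ^ (α * (L : ℝ) ^ 2)) :=
          (Real.logb_le_logb one_lt_two (by linarith) (by linarith)).mpr hfl
      _ = α * (L : ℝ) ^ 2 := Real.logb_rpow (by norm_num) (by norm_num)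
  -- bound on logb 2 (n / (4L))
  have hlogdiv : t / 2 ≤ Real.logb 2 ((n : ℝ) / (4 * (L : ℝ))) := by
    have h4L0 : (0 : ℝ) < 4 * (L : ℝ) := by linarith
    rw [Real.logb_div (by positivity) (by positivity)]
    have hle : 4 * (L : ℝ) ≤ Real.sqrt (n : ℝ) :=
      (Real.le_sqrt (by positivity) (by positivity)).mpr hsq
    have : Real.logb 2 (4 * (L : ℝ)) ≤ Real.logb 2 (Real.sqrt (n : ℝ)) :=
      (Real.logb_le_logb one_lt_two h4L0 (by positivity)).mpr hle
    have hsqrt : Real.logb 2 (Real.sqrt (n : ℝ)) = t / 2 := by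
      rw [Real.logb, Real.log_sqrt (le_of_lt hn0), htdef, Real.logb]
      ring
    rw [hsqrt] at this
    linarith
  -- combine
  have hfinal : β / 8 * t ^ 2 ≤ (L : ℝ) * (t / 2) - α * (L : ℝ) ^ 2 := by
    have hαL : α * (L : ℝ) ≤ α * (β * t) := mul_le_mul_of_nonneg_left hLle (le_of_lt hα)
    have h8 : α * (β * t) = t / 8 := by rw [← mul_assoc, hαβ]; ring
    have h2' : 3 * t / 8 ≤ t / 2 - α * (L : ℝ) := by linarith
    have h3' : (β * t / 2) * (3 * t / 8) ≤ (L : ℝ) * (t / 2 - α * (L : ℝ)) :=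
      mul_le_mul hLge2 h2' (by positivity) (le_of_lt hL0)
    have h4 : (β * t / 2) * (3 * t / 8) = 3 * (β * t ^ 2) / 16 := by ring
    have h5 : (L : ℝ) * (t / 2 - α * (L : ℝ)) = (L : ℝ) * (t / 2) - α * (L : ℝ) ^ 2 := by ring
    have h6 : 0 ≤ β * t ^ 2 := by positivity
    linarith
  have hprod : (L : ℝ) * (t / 2) ≤ (L : ℝ) * Real.logb 2 ((n : ℝ) / (4 * (L : ℝ))) :=
    mul_le_mul_of_nonneg_left hlogdiv (le_of_lt hL0)
  linarith [hfinal, hprod, hgL]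
end

section
/- Let g : ℕ → ℕ be any function with g(ℓ) ≥ 1 for all ℓ ∈ ℕ. Then Φ_g(n) = ω(log n); that is, for every constant C > 0 there exists N ∈ ℕ such that Φ_g(n) ≥ C·log₂ n for every integer n ≥ N. -/
open Real Finset

/-- Lemma 6.10: for every function `g : ℕ → ℕ` (with `g ≥ 1`),
`Φ_g(n) = ω(log n)`. -/
theorem stmt19 (g : ℕ → ℕ) (hg : ∀ ℓ, 1 ≤ g ℓ) :
    ∀ C : ℝ, 0 < C → ∃ N : ℕ, ∀ n : ℕ, N ≤ n →
      C * Real.logb 2 (n : ℝ) ≤ Phi g n := by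
  intro C hC
  set L : ℕ := ⌈C⌉₊ + 1 with hLdef
  have hLC : C < (L : ℕ) := by
    have h1 : C ≤ (⌈C⌉₊ : ℝ) := Nat.le_ceil C
    have h2 : ((⌈C⌉₊ : ℕ) : ℝ) < ((⌈C⌉₊ + 1 : ℕ) : ℝ) := by exact_mod_cast Nat.lt_succ_self _
    calc C ≤ (⌈C⌉₊ : ℝ) := h1
      _ < _ := h2
  set K : ℝ := (L : ℝ) * Real.logb 2 (4 * (L : ℝ)) + Real.logb 2 (g L) with hKdef
  have hpos : (0:ℝ) < (L : ℝ) - C := by linarith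
  refine ⟨max (4*L) (⌈(2:ℝ)^(K/((L:ℝ)-C))⌉₊ + 1), fun n hn => ?_⟩
  have hn1 : 4*L ≤ n := le_trans (le_max_left _ _) hn
  have hLpos : 0 < L := Nat.succ_pos _
  have hnpos : 0 < n := by omega
  have hn2 : (2:ℝ)^(K/((L:ℝ)-C)) ≤ (n : ℝ) := by
    have h : ⌈(2:ℝ)^(K/((L:ℝ)-C))⌉₊ + 1 ≤ n := le_trans (le_max_right _ _) hn
    calc (2:ℝ)^(K/((L:ℝ)-C)) ≤ (⌈(2:ℝ)^(K/((L:ℝ)-C))⌉₊ : ℝ) := Nat.le_ceil _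
      _ ≤ (n : ℝ) := by exact_mod_cast Nat.le_of_succ_le h
  have hlog : K / ((L:ℝ) - C) ≤ Real.logb 2 (n : ℝ) := by
    have h1 : Real.logb 2 ((2:ℝ)^(K/((L:ℝ)-C))) ≤ Real.logb 2 (n : ℝ) :=
      Real.logb_le_logb_of_le one_lt_two (Real.rpow_pos_of_pos (by norm_num) _) hn2
    rwa [Real.logb_rpow (by norm_num) (by norm_num)] at h1
  have hK : K ≤ ((L:ℝ) - C) * Real.logb 2 (n : ℝ) := by
    rw [div_le_iff₀ hpos] at hlog
    linarith
  have hmem : L ∈ Finset.range (n / 4 + 1) := by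
    rw [Finset.mem_range]
    have : L ≤ n / 4 := Nat.le_div_iff_mul_le (by norm_num) |>.mpr (by omega)
    omega
  have hle := Finset.le_sup' (f := fun (ℓ : ℕ) => (ℓ : ℝ) * Real.logb 2 ((n : ℝ) / (4 * ℓ)) -
      Real.logb 2 (g ℓ)) hmem
  refine le_trans ?_ hle
  have hdiv : Real.logb 2 ((n : ℝ) / (4 * (L:ℝ))) =
      Real.logb 2 (n : ℝ) - Real.logb 2 (4 * (L:ℝ)) := by
    apply Real.logb_div
    · exact_mod_cast hnpos.ne'
    · positivity
  rw [hdiv]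
  have : (L : ℝ) * (Real.logb 2 (n : ℝ) - Real.logb 2 (4 * (L:ℝ))) - Real.logb 2 (g L)
      = (L : ℝ) * Real.logb 2 (n : ℝ) - K := by ring
  rw [this]
  linarith
end
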